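/- For the rotation R' of ℝⁿ given by x₁ ↦ (x₁+x₂)/√2, x₂ ↦ (x₁−x₂)/√2, x_j ↦ x_j for j > 2, and any multi-index μ̃ with |μ̃| = λ, the expansion of H_μ̃(R'x) in the Hermite basis {H_ν : |ν| = λ} has nonzero coefficient on H_{μ'} where μ' = (μ̃₁+μ̃₂, 0, μ̃₃, …, μ̃_n). -/

import Mathlib

open MeasureTheory Complex Real

noncomputable def mWigner (n : ℕ) (ψ₁ ψ₂ : (Fin n → ℝ) → ℂ) (x y : Fin n → ℝ) : ℂ :=
  ((2 * Real.pi) ^ (-(n : ℤ)) : ℝ) •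
    ∫ τ : Fin n → ℝ, ψ₁ (x + τ / 2) * (starRingEnd ℂ) (ψ₂ (x - τ / 2)) *
      Complex.exp (-Complex.I * (∑ i, τ i * y i))

noncomputable def wigner (n : ℕ) (ψ : (Fin n → ℝ) → ℂ) : (Fin n → ℝ) → (Fin n → ℝ) → ℂ :=
  mWigner n ψ ψ

noncomputable def hermite1 (k : ℕ) (x : ℝ) : ℝ :=
  Real.pi ^ (-(1/4 : ℝ)) * ((Nat.factorial k : ℝ)) ^ (-(1/2 : ℝ)) * (2 : ℝ) ^ (-(k : ℝ)/2) *
    (-1) ^ k * Real.exp (x ^ 2 / 2) * iteratedDeriv k (fun t => Real.exp (-t ^ 2)) x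

noncomputable def hermiteN (n : ℕ) (μ : Fin n → ℕ) (x : Fin n → ℝ) : ℝ :=
  ∏ j, hermite1 (μ j) (x j)

noncomputable def hermiteNC (n : ℕ) (μ : Fin n → ℕ) : (Fin n → ℝ) → ℂ :=
  fun x => (hermiteN n μ x : ℂ)

noncomputable def laguerre (j m : ℕ) (x : ℝ) : ℝ :=
  ∑ i ∈ Finset.range (j + 1),
    (-1 : ℝ) ^ i * (Nat.choose (j + m) (j - i) : ℝ) / (Nat.factorial i : ℝ) * x ^ i

def ball2n (n : ℕ) (r : ℝ) : Set ((Fin n → ℝ) × (Fin n → ℝ)) :=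
  {p | ∑ i, ((p.1 i) ^ 2 + (p.2 i) ^ 2) ≤ r ^ 2}
noncomputable def rotR (n : ℕ) (hn : 2 ≤ n) (x : Fin n → ℝ) : Fin n → ℝ :=
  fun i =>
    if i = (⟨0, by omega⟩ : Fin n) then (x ⟨0, by omega⟩ + x ⟨1, by omega⟩) / Real.sqrt 2
    else if i = (⟨1, by omega⟩ : Fin n) then (x ⟨0, by omega⟩ - x ⟨1, by omega⟩) / Real.sqrt 2
    else x i


/-!
With `He_k` the probabilists' Hermite polynomials, `hermite1 k x = c_k He_k(√2 x) e^{-x²/2}`.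
Let `T = hermiteTransform` be the linear map on polynomials sending `X^m` to `∏ⱼ He_{m j}(X j)`.
Because `He_{k+1} = X He_k - He_k'`, `T` turns multiplication by a linear form `ℓ_w = ∑ wᵢ Xᵢ`
into the creation operator `f ↦ ℓ_w f - ∂_w f`; for a unit vector `w` this gives
`T(ℓ_w^k p) = He_k(ℓ_w) T(p)` whenever `∂_w T(p) = 0`. As `∂_{O i}` kills `He_k(ℓ_{O j})` for
distinct orthonormal rows, `T(∏ⱼ ℓ_{O j}^{μ j}) = ∏ⱼ He_{μ j}(ℓ_{O j})`, so expanding the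
homogeneous polynomial `∏ⱼ ℓ_{O j}^{μ j}` in monomials expands `H_μ(O x)` in the `H_ν` with
`|ν| = |μ|`. For `R'` the factors are `(X₀ ± X₁)/√2` and the `X_j` with `j ≥ 2`, so the
lexicographically leading exponent of the product is `μ'`, and its coefficient is nonzero.
-/

open Polynomial in
noncomputable def realHermite (k : ℕ) : ℝ[X] := (hermite k).map (Int.castRingHom ℝ)

open Polynomial in
lemma realHermite_succ (k : ℕ) :
    realHermite (k + 1) = X * realHermite k - derivative (realHermite k) := by
  simp [realHermite, hermite_succ, derivative_map]

lemma aeval_realHermite (k : ℕ) (x : ℝ) :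
    Polynomial.aeval x (realHermite k) = Polynomial.aeval x (Polynomial.hermite k) :=
  Polynomial.aeval_map_algebraMap ℝ x _

noncomputable def hermite1Scale (k : ℕ) : ℝ :=
  Real.pi ^ (-(1/4 : ℝ)) * ((Nat.factorial k : ℝ)) ^ (-(1/2 : ℝ))

lemma hermite1Scale_pos (k : ℕ) : 0 < hermite1Scale k := by
  unfold hermite1Scale
  have := k.factorial_pos
  positivity

lemma iteratedDeriv_exp_neg_sq (k : ℕ) (x : ℝ) :
    iteratedDeriv k (fun t => Real.exp (-t ^ 2)) x =
      (-Real.sqrt 2) ^ k * Polynomial.aeval (Real.sqrt 2 * x) (Polynomial.hermite k) *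
        Real.exp (-x ^ 2) := by
  have hscale : (fun t : ℝ => Real.exp (-t ^ 2)) =
      fun t => (fun s : ℝ => Real.exp (-(s ^ 2 / 2))) (Real.sqrt 2 * t) := by
    ext t
    dsimp only
    rw [mul_pow, Real.sq_sqrt zero_le_two]
    ring_nf
  have hsmooth : ContDiff ℝ k (fun s : ℝ => Real.exp (-(s ^ 2 / 2))) := by fun_prop
  rw [hscale, iteratedDeriv_comp_const_mul hsmooth, iteratedDeriv_eq_iterate]
  dsimp only
  rw [Polynomial.deriv_gaussian_eq_hermite_mul_gaussian, mul_pow, Real.sq_sqrt zero_le_two,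
    neg_pow]
  ring_nf

lemma hermite1_eq (k : ℕ) (x : ℝ) :
    hermite1 k x = hermite1Scale k * Polynomial.aeval (Real.sqrt 2 * x) (realHermite k) *
      Real.exp (-(x ^ 2 / 2)) := by
  have hsqrt : (2 : ℝ) ^ (-(k : ℝ) / 2) * Real.sqrt 2 ^ k = 1 := by
    rw [Real.sqrt_eq_rpow, ← Real.rpow_natCast, ← Real.rpow_mul zero_le_two,
      ← Real.rpow_add two_pos]
    ring_nf
    exact Real.rpow_zero 2
  have hexp : Real.exp (x ^ 2 / 2) * Real.exp (-x ^ 2) = Real.exp (-(x ^ 2 / 2)) := by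
    rw [← Real.exp_add]
    ring_nf
  have hsign : ((-1 : ℝ) ^ k) ^ 2 = 1 := by
    rw [← pow_mul, mul_comm, pow_mul, neg_one_sq, one_pow]
  rw [hermite1, iteratedDeriv_exp_neg_sq, hermite1Scale, neg_pow, aeval_realHermite, ← hexp]
  linear_combination (Real.pi ^ (-(1/4 : ℝ)) * ((Nat.factorial k : ℝ)) ^ (-(1/2 : ℝ)) *
    Polynomial.aeval (Real.sqrt 2 * x) (Polynomial.hermite k) * Real.exp (x ^ 2 / 2) *
    Real.exp (-x ^ 2)) * (((-1 : ℝ) ^ k) ^ 2 * hsqrt + hsign)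

lemma Derivation.map_prod_eq_zero {R A M : Type*} [CommSemiring R] [CommSemiring A]
    [AddCommMonoid M] [Algebra R A] [Module A M] [Module R M] (D : Derivation R A M)
    {ι : Type*} (s : Finset ι) (f : ι → A) (hf : ∀ i ∈ s, D (f i) = 0) :
    D (∏ i ∈ s, f i) = 0 := by
  classical
  induction s using Finset.induction_on with
  | empty => simp
  | insert j s hj ih =>
    rw [Finset.prod_insert hj, Derivation.leibniz, hf j (Finset.mem_insert_self j s),
      ih fun i hi => hf i (Finset.mem_insert_of_mem hi)]
    simp

open Polynomial in
lemma aeval_X_mul_sub_derivative_mul {R A : Type*} [CommRing R] [CommRing A] [Algebra R A]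
    (D : Derivation R A A) {ℓ r : A} (hℓ : D ℓ = 1) (hr : D r = 0) (p : R[X]) :
    aeval ℓ (X * p - derivative p) * r = ℓ * (aeval ℓ p * r) - D (aeval ℓ p * r) := by
  rw [Derivation.leibniz, Derivation.map_aeval, hr, hℓ]
  simp only [map_sub, map_mul, aeval_X, smul_eq_mul]
  ring

noncomputable def multiIndicesOfDegree (n d : ℕ) : Finset (Fin n → ℕ) :=
  (Finset.Iic fun _ => d).filter fun ν => ∑ j, ν j = d

namespace MvPolynomial

variable {σ R : Type*} [CommSemiring R]

lemma eval_aeval (y : σ → R) (q : MvPolynomial σ R) (p : Polynomial R) :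
    eval y (Polynomial.aeval q p) = Polynomial.aeval (eval y q) p := by
  simpa using (Polynomial.aeval_algHom_apply (MvPolynomial.aeval y) q p).symm

lemma pderiv_aeval_X_of_ne {i j : σ} (h : j ≠ i) (p : Polynomial R) :
    pderiv i (Polynomial.aeval (X j : MvPolynomial σ R) p) = 0 := by
  classical
  rw [Derivation.map_aeval]
  simp [pderiv_X, h]

lemma IsHomogeneous.eq_sum_multiIndicesOfDegree {n d : ℕ} {p : MvPolynomial (Fin n) R}
    (hp : p.IsHomogeneous d) :
    p = ∑ ν ∈ multiIndicesOfDegree n d,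
      monomial (Finsupp.equivFunOnFinite.symm ν) (coeff (Finsupp.equivFunOnFinite.symm ν) p) := by
  conv_lhs => rw [p.as_sum]
  refine (Finset.sum_subset (fun m hm => Finset.mem_map_equiv.mpr ?_) fun m _ hm => ?_).trans
    (Finset.sum_map _ Finsupp.equivFunOnFinite.symm.toEmbedding fun m => monomial m (coeff m p))
  · have hdeg : ∑ j, m j = d := by
      rw [← Finsupp.degree_eq_sum, Finsupp.degree_apply, ← hp.degree_eq_sum_deg_support hm]
    refine Finset.mem_filter.mpr ⟨Finset.mem_Iic.mpr fun j => ?_, by simpa using hdeg⟩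
    exact hdeg ▸ Finset.single_le_sum (fun _ _ => Nat.zero_le _) (Finset.mem_univ j)
  · rw [notMem_support_iff.mp hm, monomial_zero]

variable [Fintype σ]

noncomputable def linearForm (w : σ → ℝ) : MvPolynomial σ ℝ := ∑ i, w i • X i

noncomputable def dirDeriv (w : σ → ℝ) :
    Derivation ℝ (MvPolynomial σ ℝ) (MvPolynomial σ ℝ) :=
  ∑ i, w i • pderiv i

lemma dirDeriv_apply (w : σ → ℝ) (p : MvPolynomial σ ℝ) :
    dirDeriv w p = ∑ i, w i • pderiv i p := by
  rw [dirDeriv, ← Derivation.coeFnAddMonoidHom_apply, map_sum, Finset.sum_apply]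
  rfl

lemma dirDeriv_linearForm (w v : σ → ℝ) : dirDeriv w (linearForm v) = C (w ⬝ᵥ v) := by
  classical
  simp [dirDeriv_apply, linearForm, pderiv_X, Pi.single_apply, dotProduct, smul_eq_C_mul,
    mul_comm]

lemma dirDeriv_aeval_linearForm {w v : σ → ℝ} (h : w ⬝ᵥ v = 0) (p : Polynomial ℝ) :
    dirDeriv w (Polynomial.aeval (linearForm v) p) = 0 := by
  rw [Derivation.map_aeval, dirDeriv_linearForm, h, C_0, smul_zero]

lemma eval_linearForm (w y : σ → ℝ) : eval y (linearForm w) = w ⬝ᵥ y := by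
  simp [linearForm, dotProduct]

lemma isHomogeneous_linearForm (w : σ → ℝ) : (linearForm w).IsHomogeneous 1 :=
  IsHomogeneous.sum _ _ _ fun i _ => by
    rw [smul_eq_C_mul]
    exact isHomogeneous_C_mul_X _ i

noncomputable def multiHermite (m : σ → ℕ) : MvPolynomial σ ℝ :=
  ∏ i, Polynomial.aeval (X i) (realHermite (m i))

noncomputable def hermiteTransform : MvPolynomial σ ℝ →ₗ[ℝ] MvPolynomial σ ℝ :=
  (basisMonomials σ ℝ).constr ℝ fun m => multiHermite m

lemma hermiteTransform_monomial (m : σ →₀ ℕ) (c : ℝ) :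
    hermiteTransform (monomial m c) = c • multiHermite m := by
  have hbasis : hermiteTransform (monomial m (1 : ℝ)) = multiHermite m := by
    simpa [hermiteTransform] using
      (basisMonomials σ ℝ).constr_basis ℝ (fun m => multiHermite (σ := σ) ⇑m) m
  rw [← hbasis, ← map_smul, smul_monomial, smul_eq_mul, mul_one]

lemma hermiteTransform_one : hermiteTransform (1 : MvPolynomial σ ℝ) = 1 := by
  rw [← C_1, ← monomial_zero', hermiteTransform_monomial]
  simp [multiHermite, realHermite]

lemma multiHermite_add_single (m : σ →₀ ℕ) (i : σ) :
    multiHermite ⇑(m + Finsupp.single i 1 : σ →₀ ℕ) =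
      X i * multiHermite m - pderiv i (multiHermite m) := by
  classical
  set r := ∏ j ∈ Finset.univ.erase i, Polynomial.aeval (X j : MvPolynomial σ ℝ)
    (realHermite (m j)) with hr
  have hsplit : ∀ m' : σ → ℕ, (∀ j ≠ i, m' j = m j) →
      multiHermite m' = Polynomial.aeval (X i) (realHermite (m' i)) * r := by
    intro m' hm'
    rw [multiHermite, ← Finset.mul_prod_erase _ _ (Finset.mem_univ i), hr]
    congr 1
    exact Finset.prod_congr rfl fun j hj => by rw [hm' j (Finset.ne_of_mem_erase hj)]
  have hr_const : pderiv i r = 0 :=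
    Derivation.map_prod_eq_zero _ _ _ fun j hj =>
      pderiv_aeval_X_of_ne (Finset.ne_of_mem_erase hj) _
  rw [hsplit _ fun j hj => by simp [Ne.symm hj], hsplit m fun _ _ => rfl, Finsupp.add_apply,
    Finsupp.single_eq_same, realHermite_succ]
  exact aeval_X_mul_sub_derivative_mul (pderiv i) (by simp) hr_const _

lemma hermiteTransform_X_mul (i : σ) (p : MvPolynomial σ ℝ) :
    hermiteTransform (X i * p) = X i * hermiteTransform p - pderiv i (hermiteTransform p) := by
  induction p using MvPolynomial.induction_on' with
  | monomial m c =>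
    rw [show X i * monomial m c = monomial (Finsupp.single i 1 + m) c by
      rw [X, monomial_mul, one_mul], hermiteTransform_monomial, hermiteTransform_monomial,
      add_comm, multiHermite_add_single, Derivation.map_smul]
    simp only [smul_sub, mul_smul_comm]
  | add p q hp hq =>
    simp only [mul_add, map_add, hp, hq]
    ring

lemma hermiteTransform_linearForm_mul (w : σ → ℝ) (p : MvPolynomial σ ℝ) :
    hermiteTransform (linearForm w * p) =
      linearForm w * hermiteTransform p - dirDeriv w (hermiteTransform p) := by
  simp only [linearForm, Finset.sum_mul, smul_mul_assoc, map_sum, map_smul, hermiteTransform_X_mul,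
    dirDeriv_apply, smul_sub, Finset.sum_sub_distrib]

lemma hermiteTransform_linearForm_pow_mul {w : σ → ℝ} (hw : w ⬝ᵥ w = 1)
    {p : MvPolynomial σ ℝ} (hp : dirDeriv w (hermiteTransform p) = 0) (k : ℕ) :
    hermiteTransform (linearForm w ^ k * p) =
      Polynomial.aeval (linearForm w) (realHermite k) * hermiteTransform p := by
  induction k with
  | zero => simp [realHermite]
  | succ k ih =>
    rw [pow_succ', mul_assoc, hermiteTransform_linearForm_mul, ih, realHermite_succ,
      aeval_X_mul_sub_derivative_mul _ (by rw [dirDeriv_linearForm, hw, C_1]) hp]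

lemma hermiteTransform_prod_linearForm_pow {ι : Type*} {w : ι → σ → ℝ}
    (hnorm : ∀ i, w i ⬝ᵥ w i = 1) (horth : Pairwise fun i j => w i ⬝ᵥ w j = 0)
    (k : ι → ℕ) (s : Finset ι) :
    hermiteTransform (∏ j ∈ s, linearForm (w j) ^ k j) =
      ∏ j ∈ s, Polynomial.aeval (linearForm (w j)) (realHermite (k j)) := by
  classical
  induction s using Finset.induction_on with
  | empty => simpa using hermiteTransform_one
  | insert i s hi ih =>
    have hkill : dirDeriv (w i) (hermiteTransform (∏ j ∈ s, linearForm (w j) ^ k j)) = 0 := by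
      rw [ih]
      exact Derivation.map_prod_eq_zero _ _ _ fun j hj =>
        dirDeriv_aeval_linearForm (horth (ne_of_mem_of_not_mem hj hi).symm) _
    rw [Finset.prod_insert hi, Finset.prod_insert hi,
      hermiteTransform_linearForm_pow_mul (hnorm i) hkill, ih]

lemma lex_degree_linearForm {n : ℕ} {w : Fin n → ℝ} {i : Fin n} (hi : w i ≠ 0)
    (hlt : ∀ k < i, w k = 0) :
    MonomialOrder.lex.degree (linearForm w) = Finsupp.single i 1 := by
  have hcoeff : ∀ c, coeff c (linearForm w) =
      ∑ k, w k * if Finsupp.single k 1 = c then 1 else 0 := by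
    simp [linearForm, coeff_sum, coeff_X]
  have hsupp : ∀ c ∈ (linearForm w).support, ∃ k, Finsupp.single k 1 = c ∧ w k ≠ 0 := by
    intro c hc
    obtain ⟨k, -, hk⟩ := Finset.exists_ne_zero_of_sum_ne_zero
      ((hcoeff c).symm.trans_ne (mem_support_iff.mp hc))
    exact ⟨k, by by_contra h; simp [h] at hk, left_ne_zero_of_mul hk⟩
  apply MonomialOrder.lex.toSyn.injective
  refine le_antisymm (MonomialOrder.degree_le_iff.mpr fun c hc => ?_)
    (MonomialOrder.le_degree (mem_support_iff.mpr (by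
      simpa [hcoeff, Finsupp.single_left_inj one_ne_zero] using hi)))
  obtain ⟨k, rfl, hk⟩ := hsupp c hc
  exact Finsupp.Lex.single_le_iff.mpr (not_lt.mp fun hki => hk (hlt k hki))

end MvPolynomial

open MvPolynomial Matrix

lemma Matrix.mem_orthogonalGroup_iff_dotProduct {m R : Type*} [Fintype m] [DecidableEq m]
    [CommRing R] {O : Matrix m m R} :
    O ∈ orthogonalGroup m R ↔ ∀ i j, O i ⬝ᵥ O j = if i = j then 1 else 0 := by
  rw [mem_orthogonalGroup_iff, ← Matrix.ext_iff]
  simp [Matrix.mul_apply, dotProduct, Matrix.one_apply]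

lemma Matrix.mulVec_dotProduct_mulVec_of_mem_orthogonalGroup {m R : Type*} [Fintype m]
    [DecidableEq m] [CommRing R] {O : Matrix m m R} (hO : O ∈ orthogonalGroup m R) (x : m → R) :
    O *ᵥ x ⬝ᵥ O *ᵥ x = x ⬝ᵥ x := by
  rw [dotProduct_mulVec, ← vecMul_transpose, vecMul_vecMul, (mem_orthogonalGroup_iff' m R).mp hO,
    vecMul_one]

noncomputable def rotatedMonomial {n : ℕ} (O : Matrix (Fin n) (Fin n) ℝ) (μ : Fin n → ℕ) :
    MvPolynomial (Fin n) ℝ :=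
  ∏ j, linearForm (O j) ^ μ j

noncomputable def hermiteRotationCoeff {n : ℕ} (O : Matrix (Fin n) (Fin n) ℝ)
    (μ ν : Fin n → ℕ) : ℝ :=
  (∏ j, hermite1Scale (μ j)) / (∏ j, hermite1Scale (ν j)) *
    coeff (Finsupp.equivFunOnFinite.symm ν) (rotatedMonomial O μ)

lemma isHomogeneous_rotatedMonomial {n : ℕ} (O : Matrix (Fin n) (Fin n) ℝ)
    (μ : Fin n → ℕ) :
    (rotatedMonomial O μ).IsHomogeneous (∑ j, μ j) := by
  simpa [rotatedMonomial] using
    IsHomogeneous.prod _ _ _ fun j _ => (isHomogeneous_linearForm (O j)).pow (μ j)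

lemma eval_mulVec_multiHermite {n : ℕ} (O : Matrix (Fin n) (Fin n) ℝ) (μ : Fin n → ℕ)
    (y : Fin n → ℝ) :
    eval (O *ᵥ y) (multiHermite μ) =
      eval y (∏ j, Polynomial.aeval (linearForm (O j)) (realHermite (μ j))) := by
  simp only [multiHermite, eval_prod, eval_aeval, eval_X, eval_linearForm]
  rfl

lemma hermiteN_eq (n : ℕ) (ν : Fin n → ℕ) (x : Fin n → ℝ) :
    hermiteN n ν x = (∏ j, hermite1Scale (ν j)) *
      eval (Real.sqrt 2 • x) (multiHermite ν) * Real.exp (-(x ⬝ᵥ x) / 2) := by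
  simp only [hermiteN, hermite1_eq, multiHermite, eval_prod, eval_aeval, eval_X, Pi.smul_apply,
    smul_eq_mul, Finset.prod_mul_distrib, ← Real.exp_sum]
  congr 2
  simp [dotProduct, Finset.sum_div, neg_div, sq]

theorem hermiteN_mulVec_eq_sum {n : ℕ} {O : Matrix (Fin n) (Fin n) ℝ}
    (hO : O ∈ orthogonalGroup (Fin n) ℝ) (μ : Fin n → ℕ) (x : Fin n → ℝ) :
    hermiteN n μ (O *ᵥ x) = ∑ ν ∈ multiIndicesOfDegree n (∑ j, μ j),
      hermiteRotationCoeff O μ ν * hermiteN n ν x := by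
  have hrows := Matrix.mem_orthogonalGroup_iff_dotProduct.mp hO
  have htransform : hermiteTransform (rotatedMonomial O μ) =
      ∏ j, Polynomial.aeval (linearForm (O j)) (realHermite (μ j)) :=
    hermiteTransform_prod_linearForm_pow (fun i => by simp [hrows])
      (fun i j hij => by simp [hrows, hij]) μ Finset.univ
  have hexpand := congrArg hermiteTransform
    (isHomogeneous_rotatedMonomial O μ).eq_sum_multiIndicesOfDegree
  simp only [map_sum, hermiteTransform_monomial, Finsupp.coe_equivFunOnFinite_symm] at hexpand
  rw [hermiteN_eq, ← mulVec_smul, eval_mulVec_multiHermite, ← htransform, hexpand,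
    Matrix.mulVec_dotProduct_mulVec_of_mem_orthogonalGroup hO, eval_sum, Finset.mul_sum,
    Finset.sum_mul]
  refine Finset.sum_congr rfl fun ν _ => ?_
  have hscale : ∏ j, hermite1Scale (ν j) ≠ 0 :=
    Finset.prod_ne_zero_iff.mpr fun j _ => (hermite1Scale_pos _).ne'
  rw [hermiteN_eq, hermiteRotationCoeff, smul_eval]
  field_simp

lemma coeff_rotatedMonomial_ne_zero {n : ℕ} {O : Matrix (Fin n) (Fin n) ℝ}
    {pivot : Fin n → Fin n} (hpivot : ∀ j, O j (pivot j) ≠ 0)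
    (hlt : ∀ j, ∀ k < pivot j, O j k = 0) (μ : Fin n → ℕ) :
    coeff (∑ j, μ j • Finsupp.single (pivot j) 1) (rotatedMonomial O μ) ≠ 0 := by
  have hdeg : ∀ j, MonomialOrder.lex.degree (linearForm (O j)) = Finsupp.single (pivot j) 1 :=
    fun j => lex_degree_linearForm (hpivot j) (hlt j)
  have hne : ∀ j, linearForm (O j) ^ μ j ≠ 0 := fun j => pow_ne_zero _ fun h => by
    simpa [h] using (hdeg j).symm
  have hdegP : MonomialOrder.lex.degree (rotatedMonomial O μ) =
      ∑ j, μ j • Finsupp.single (pivot j) 1 := by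
    simp [rotatedMonomial, MonomialOrder.degree_prod fun j _ => hne j,
      MonomialOrder.degree_pow, hdeg]
  rw [← hdegP]
  exact MonomialOrder.coeff_degree_ne_zero_iff.mpr (Finset.prod_ne_zero_iff.mpr fun j _ => hne j)

noncomputable def rotRMatrix (n : ℕ) (hn : 2 ≤ n) : Matrix (Fin n) (Fin n) ℝ := fun i =>
  if i = ⟨0, by omega⟩ then
    (Real.sqrt 2)⁻¹ • (Pi.single ⟨0, by omega⟩ 1 + Pi.single ⟨1, by omega⟩ 1)
  else if i = ⟨1, by omega⟩ then
    (Real.sqrt 2)⁻¹ • (Pi.single ⟨0, by omega⟩ 1 - Pi.single ⟨1, by omega⟩ 1)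
  else Pi.single i 1

lemma rotR_eq_mulVec (n : ℕ) (hn : 2 ≤ n) (x : Fin n → ℝ) :
    rotR n hn x = rotRMatrix n hn *ᵥ x := by
  ext i
  change _ = rotRMatrix n hn i ⬝ᵥ x
  simp only [rotR, rotRMatrix]
  split_ifs <;> simp [add_dotProduct, sub_dotProduct, single_dotProduct, div_eq_inv_mul, mul_add,
    mul_sub]

lemma rotRMatrix_mem_orthogonalGroup (n : ℕ) (hn : 2 ≤ n) :
    rotRMatrix n hn ∈ orthogonalGroup (Fin n) ℝ := by
  rw [Matrix.mem_orthogonalGroup_iff_dotProduct]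
  intro i j
  simp only [rotRMatrix]
  split_ifs <;> simp_all [dotProduct_add, dotProduct_sub, Pi.single_apply, Fin.ext_iff] <;>
    ring_nf <;> simp

def rotRPivot (n : ℕ) (hn : 2 ≤ n) (j : Fin n) : Fin n :=
  if j = ⟨1, by omega⟩ then ⟨0, by omega⟩ else j

lemma rotRMatrix_apply_rotRPivot_ne_zero (n : ℕ) (hn : 2 ≤ n) (j : Fin n) :
    rotRMatrix n hn j (rotRPivot n hn j) ≠ 0 := by
  simp only [rotRMatrix, rotRPivot]
  split_ifs <;> simp_all [Pi.single_apply, Fin.ext_iff]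

lemma rotRMatrix_apply_eq_zero_of_lt_rotRPivot (n : ℕ) (hn : 2 ≤ n) (j k : Fin n)
    (hk : k < rotRPivot n hn j) : rotRMatrix n hn j k = 0 := by
  unfold rotRPivot at hk
  unfold rotRMatrix
  split_ifs at hk ⊢ <;> subst_vars
  all_goals first
    | exact absurd (Fin.lt_def.mp hk) (Nat.not_lt_zero _)
    | simp [ne_of_lt hk]

lemma sum_smul_single_rotRPivot (n : ℕ) (hn : 2 ≤ n) (μ : Fin n → ℕ) :
    ∑ j, μ j • Finsupp.single (rotRPivot n hn j) 1 = Finsupp.equivFunOnFinite.symm fun i =>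
      if i = (⟨0, by omega⟩ : Fin n) then μ ⟨0, by omega⟩ + μ ⟨1, by omega⟩
      else if i = (⟨1, by omega⟩ : Fin n) then 0
      else μ i := by
  have h10 : (⟨1, by omega⟩ : Fin n) ≠ ⟨0, by omega⟩ := by simp [Fin.ext_iff]
  ext k
  simp only [Finsupp.coe_finsetSum, Finset.sum_apply, Finsupp.smul_apply, Finsupp.single_apply,
    rotRPivot, smul_eq_mul, mul_ite, mul_one, mul_zero, Finsupp.coe_equivFunOnFinite_symm]
  split_ifs with h0 h1
  · subst h0
    rw [Fintype.sum_eq_add _ _ h10.symm fun j hj => by simp [hj.1, hj.2]]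
    simp
  · subst h1
    exact Fintype.sum_eq_zero _ fun j => by split_ifs <;> simp_all
  · rw [Fintype.sum_eq_single k fun j hj => by split_ifs <;> simp_all [Ne.symm]]
    simp [h1]

theorem rotation_coeff_nonzero (n : ℕ) (hn : 2 ≤ n) (lam : ℕ)
    (μ : Fin n → ℕ) (hμ : ∑ j, μ j = lam)
    (μ' : Fin n → ℕ)
    (hμ' : μ' = fun i =>
      if i = (⟨0, by omega⟩ : Fin n) then μ ⟨0, by omega⟩ + μ ⟨1, by omega⟩
      else if i = (⟨1, by omega⟩ : Fin n) then 0
      else μ i) :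
    ∃ c : (Fin n → ℕ) → ℝ,
      (∀ x : Fin n → ℝ,
        hermiteN n μ (rotR n hn x) =
          ∑ ν ∈ (Finset.Iic (fun _ => lam : Fin n → ℕ)).filter (fun ν => ∑ j, ν j = lam),
            c ν * hermiteN n ν x) ∧
      c μ' ≠ 0 := by
  refine ⟨hermiteRotationCoeff (rotRMatrix n hn) μ, fun x => ?_, ?_⟩
  · rw [rotR_eq_mulVec, hermiteN_mulVec_eq_sum (rotRMatrix_mem_orthogonalGroup n hn), hμ]
    rfl
  · rw [hermiteRotationCoeff, hμ', ← sum_smul_single_rotRPivot n hn]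
    refine mul_ne_zero (div_ne_zero ?_ ?_) (coeff_rotatedMonomial_ne_zero
      (rotRMatrix_apply_rotRPivot_ne_zero n hn) (rotRMatrix_apply_eq_zero_of_lt_rotRPivot n hn) μ)
    all_goals exact Finset.prod_ne_zero_iff.mpr fun j _ => (hermite1Scale_pos _).ne'
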